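/- arXiv:cs/0608076 — 7 statements merged into one kernel-verified Lean document; each statement's English description precedes it below -/
import Mathlib

section
/- Let P_{XY} be a distribution over {0,1} × Y. There exists a conditional distribution P_{B|XY} over {0,1} such that Pr[B=1] ≤ PredAdv(X | Y) and, for every function f : Y → {0,1} with Pr[B=0]>0, Pr[f(Y)=X | B=0] = 1/2. -/
/-!
Let `m(y) = min (P(0,y), P(1,y))` be the mass that the two values of `X` share at `Y = y`.
Keep each outcome `(x,y)` in the event `B = 0` with probability `m(y) / P(x,y)`: then
`Pr[X = x, Y = y, B = 0] = m(y)` for both `x`, so given `B = 0` the bit `X` is uniform and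
independent of `Y`. The remaining mass `Pr[B = 1] = ∑_y |P(0,y) - P(1,y)|` is the advantage
of the maximum-likelihood predictor of `X` from `Y`.
-/

open Finset

/-- Maximal bit-prediction advantage of `X` from `Z` for a joint distribution
`P` on `ZMod 2 × Z`: `2 · max_f Pr[f(Z) = X] − 1`. -/
noncomputable def predAdv {Z : Type*} [Fintype Z] (P : ZMod 2 × Z → ℝ) : ℝ :=
  2 * (⨆ f : Z → ZMod 2, ∑ z, P (f z, z)) - 1

namespace PredAdv

variable {Y : Type*} {P : ZMod 2 × Y → ℝ}

noncomputable def commonMass (P : ZMod 2 × Y → ℝ) (y : Y) : ℝ :=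
  min (P (0, y)) (P (1, y))

/-- `Pr[B = 1 | X = x, Y = y]`. Where `P (x, y) = 0` the division returns `0`, so the value
is `1`; any value would do there. -/
noncomputable def condProbOne (P : ZMod 2 × Y → ℝ) (a : ZMod 2 × Y) : ℝ :=
  1 - commonMass P a.2 / P a

theorem commonMass_nonneg (hP : ∀ a, 0 ≤ P a) (y : Y) : 0 ≤ commonMass P y :=
  le_min (hP _) (hP _)

theorem commonMass_le (x : ZMod 2) (y : Y) : commonMass P y ≤ P (x, y) := by
  fin_cases x
  · exact min_le_left _ _
  · exact min_le_right _ _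

theorem condProbOne_nonneg (hP : ∀ a, 0 ≤ P a) (a : ZMod 2 × Y) : 0 ≤ condProbOne P a :=
  sub_nonneg.2 (div_le_one_of_le₀ (commonMass_le a.1 a.2) (hP a))

theorem condProbOne_le_one (hP : ∀ a, 0 ≤ P a) (a : ZMod 2 × Y) : condProbOne P a ≤ 1 :=
  sub_le_self _ (div_nonneg (commonMass_nonneg hP _) (hP a))

theorem mul_one_sub_condProbOne (hP : ∀ a, 0 ≤ P a) (a : ZMod 2 × Y) :
    P a * (1 - condProbOne P a) = commonMass P a.2 := by
  rcases eq_or_ne (P a) 0 with h | h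
  · have : commonMass P a.2 = 0 :=
      le_antisymm (h ▸ commonMass_le a.1 a.2) (commonMass_nonneg hP _)
    simp [h, this]
  · simp [condProbOne, mul_div_cancel₀ _ h]

variable [Fintype Y]

theorem sum_zmod_two_prod {M : Type*} [AddCommMonoid M] (g : ZMod 2 × Y → M) :
    ∑ a, g a = ∑ y, (g (0, y) + g (1, y)) := by
  rw [Fintype.sum_prod_type_right]
  exact sum_congr rfl fun y _ => Fin.sum_univ_two _

theorem sum_mul_one_sub_condProbOne (hP : ∀ a, 0 ≤ P a) :
    ∑ a, P a * (1 - condProbOne P a) = 2 * ∑ y, commonMass P y := by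
  simp only [mul_one_sub_condProbOne hP, sum_zmod_two_prod, ← two_mul, mul_sum]

theorem one_sub_two_mul_sum_commonMass_le_predAdv (hPs : ∑ a, P a = 1) :
    1 - 2 * ∑ y, commonMass P y ≤ predAdv P := by
  let mle : Y → ZMod 2 := fun y => if P (1, y) ≤ P (0, y) then 0 else 1
  have mle_add_commonMass (y : Y) : P (mle y, y) + commonMass P y = P (0, y) + P (1, y) := by
    by_cases h : P (1, y) ≤ P (0, y)
    · simp only [mle, commonMass, if_pos h, min_eq_right h]
    · simp only [mle, commonMass, if_neg h, min_eq_left (le_of_not_ge h)]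
      ring
  have mle_sum : ∑ y, P (mle y, y) = 1 - ∑ y, commonMass P y := by
    rw [eq_sub_iff_add_eq, ← sum_add_distrib, ← hPs, sum_zmod_two_prod]
    exact sum_congr rfl fun y _ => mle_add_commonMass y
  have : ∑ y, P (mle y, y) ≤ ⨆ f : Y → ZMod 2, ∑ z, P (f z, z) :=
    le_ciSup (f := fun f : Y → ZMod 2 => ∑ z, P (f z, z)) (Set.finite_range _).bddAbove mle
  rw [predAdv]
  linarith

end PredAdv

open PredAdv in
/-- There is a conditional distribution `P_{B∣XY}` (given by the probability
`β (x,y)` of `B = 1`) with `Pr[B=1] ≤ PredAdv(X∣Y)` such that conditioned on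
`B = 0` no function `f` predicts `X` from `Y` with any advantage. -/
theorem stmt_5 {Y : Type*} [Fintype Y]
    (P : ZMod 2 × Y → ℝ)
    (hP : ∀ a, 0 ≤ P a) (hPs : ∑ a, P a = 1) :
    ∃ β : ZMod 2 × Y → ℝ, (∀ a, 0 ≤ β a) ∧ (∀ a, β a ≤ 1) ∧
      (∑ a, P a * β a) ≤ predAdv P ∧
      ∀ f : Y → ZMod 2, 0 < ∑ a, P a * (1 - β a) →
        (∑ y, P (f y, y) * (1 - β (f y, y))) / (∑ a, P a * (1 - β a)) = 1/2 := by
  have hB0 := sum_mul_one_sub_condProbOne hP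
  refine ⟨condProbOne P, condProbOne_nonneg hP, condProbOne_le_one hP, ?_, ?_⟩
  · have hB1 : ∑ a, P a * condProbOne P a = 1 - 2 * ∑ y, commonMass P y := by
      rw [← hPs, ← hB0, ← sum_sub_distrib]
      exact sum_congr rfl fun a _ => by ring
    exact hB1 ▸ one_sub_two_mul_sum_commonMass_le_predAdv hPs
  · intro f hpos
    rw [hB0] at hpos ⊢
    simp only [fun y => mul_one_sub_condProbOne hP (f y, y)]
    have : 0 < ∑ y, commonMass P y := by linarith
    field_simp
end

section
/- Let (X_0,Y_0),…,(X_{n−1},Y_{n−1}) be independent pairs with X_i ∈ {0,1} and Y_i over finite sets Y_i. Then PredAdv(X_0 ⊕ ⋯ ⊕ X_{n−1} | Y_0,…,Y_{n−1}) ≤ Π_{i=0}^{n−1} PredAdv(X_i | Y_i). -/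
open Finset

/-- The character `(-1)^a` on `ZMod 2`. -/
noncomputable def χ : ZMod 2 → ℝ := fun a => if a = 0 then 1 else -1

lemma zmod2_cases (a : ZMod 2) : a = 0 ∨ a = 1 := by
  have : ∀ a : ZMod 2, a = 0 ∨ a = 1 := by decide
  exact this a

lemma χ_zero : χ 0 = 1 := by simp [χ]

lemma χ_one : χ 1 = -1 := by simp [χ]

lemma χ_add (a b : ZMod 2) : χ (a + b) = χ a * χ b := by
  rcases zmod2_cases a with ha | ha <;> rcases zmod2_cases b with hb | hb <;>
      subst ha <;> subst hb <;>
    simp [χ, show (1 + 1 : ZMod 2) = 0 by decide]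

lemma χ_sum {ι : Type*} (s : Finset ι) (x : ι → ZMod 2) :
    χ (∑ i ∈ s, x i) = ∏ i ∈ s, χ (x i) := by
  induction s using Finset.cons_induction with
  | empty => simp [χ_zero]
  | cons a s h ih => rw [Finset.sum_cons, Finset.prod_cons, χ_add, ih]

lemma zmod2_sum (f : ZMod 2 → ℝ) : ∑ a : ZMod 2, f a = f 0 + f 1 :=
  Fin.sum_univ_two f

/-- The prediction advantage equals the ℓ¹-distance between the two slices. -/
lemma predAdv_eq {Z : Type*} [Fintype Z] (P : ZMod 2 × Z → ℝ)
    (h : ∑ a, P a = 1) :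
    predAdv P = ∑ z, |P (0, z) - P (1, z)| := by
  unfold predAdv
  have hsup : (⨆ f : Z → ZMod 2, ∑ z, P (f z, z))
      = ∑ z, max (P (0, z)) (P (1, z)) := by
    apply le_antisymm
    · apply ciSup_le
      intro f
      apply Finset.sum_le_sum
      intro z _
      rcases zmod2_cases (f z) with hf | hf <;> rw [hf]
      · exact le_max_left _ _
      · exact le_max_right _ _
    · have hb : BddAbove (Set.range fun f : Z → ZMod 2 => ∑ z, P (f z, z)) :=
        (Set.finite_range _).bddAbove
      refine le_trans ?_ (le_ciSup hb (fun z => if P (0, z) < P (1, z) then 1 else 0))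
      apply le_of_eq
      apply Finset.sum_congr rfl
      intro z _
      by_cases hz : P (0, z) < P (1, z) <;> simp only [hz, if_true, if_false]
      · exact max_eq_right hz.le
      · exact max_eq_left (not_lt.1 hz)
  have hsum : ∑ z, (P (0, z) + P (1, z)) = 1 := by
    rw [← h, Fintype.sum_prod_type, Finset.sum_comm]
    exact Finset.sum_congr rfl fun z _ => (zmod2_sum fun b => P (b, z)).symm
  rw [hsup, ← hsum, Finset.mul_sum, ← Finset.sum_sub_distrib]
  apply Finset.sum_congr rfl
  intro z _
  have h1 : max (P (0, z)) (P (1, z)) - min (P (0, z)) (P (1, z))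
      = |P (1, z) - P (0, z)| := max_sub_min_eq_abs _ _
  have h2 : max (P (0, z)) (P (1, z)) + min (P (0, z)) (P (1, z))
      = P (0, z) + P (1, z) := max_add_min _ _
  rw [abs_sub_comm]
  linarith

/-- For independent pairs `(X_i, Y_i)`, the advantage in predicting
`X_0 ⊕ ⋯ ⊕ X_{n−1}` from `(Y_0, …, Y_{n−1})` is at most the product of the
individual prediction advantages. -/
theorem stmt_7 {n : ℕ} {Y : Fin n → Type*} [∀ i, Fintype (Y i)]
    (P : ∀ i, ZMod 2 × Y i → ℝ)
    (hP : ∀ i a, 0 ≤ P i a) (hPs : ∀ i, ∑ a, P i a = 1) :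
    predAdv (fun a : ZMod 2 × (∀ i, Y i) =>
        ∑ x ∈ Finset.univ.filter (fun x : Fin n → ZMod 2 => (∑ i, x i) = a.1),
          ∏ i, P i (x i, a.2 i))
      ≤ ∏ i, predAdv (P i) := by
  classical
  set J : ZMod 2 × (∀ i, Y i) → ℝ := fun a =>
    ∑ x ∈ Finset.univ.filter (fun x : Fin n → ZMod 2 => (∑ i, x i) = a.1),
      ∏ i, P i (x i, a.2 i) with hJ
  -- fiberwise decomposition of sums over all x
  have hfib : ∀ g : (Fin n → ZMod 2) → ℝ,
      (∑ a : ZMod 2, ∑ x ∈ Finset.univ.filter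
          (fun x : Fin n → ZMod 2 => (∑ i, x i) = a), g x)
        = ∑ x : Fin n → ZMod 2, g x := fun g =>
    Finset.sum_fiberwise_of_maps_to (fun x _ => Finset.mem_univ _) g
  -- normalization of the joint distribution
  have hJs : ∑ a, J a = 1 := by
    rw [Fintype.sum_prod_type, Finset.sum_comm]
    have : ∀ z : ∀ i, Y i, (∑ a : ZMod 2, J (a, z))
        = ∏ i, ∑ b : ZMod 2, P i (b, z i) := by
      intro z
      rw [Fintype.prod_sum fun i b => P i (b, z i)]
      exact hfib fun x => ∏ i, P i (x i, z i)
    rw [Finset.sum_congr rfl fun z _ => this z,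
      ← Fintype.prod_sum fun i (y : Y i) => ∑ b : ZMod 2, P i (b, y)]
    rw [show (1 : ℝ) = ∏ i : Fin n, 1 from (Finset.prod_const_one).symm]
    refine Finset.prod_congr rfl fun i _ => ?_
    rw [← hPs i, Fintype.sum_prod_type]
    exact Finset.sum_comm
  -- the bias of the joint factors as a product of biases
  have hbias : ∀ z : ∀ i, Y i,
      J (0, z) - J (1, z) = ∏ i, (P i (0, z i) - P i (1, z i)) := by
    intro z
    have hterm : ∀ i, P i (0, z i) - P i (1, z i)
        = ∑ b : ZMod 2, χ b * P i (b, z i) := by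
      intro i
      rw [zmod2_sum fun b => χ b * P i (b, z i), χ_zero, χ_one]
      ring
    calc J (0, z) - J (1, z)
        = ∑ a : ZMod 2, χ a * ∑ x ∈ Finset.univ.filter
            (fun x : Fin n → ZMod 2 => (∑ i, x i) = a), ∏ i, P i (x i, z i) := by
          rw [zmod2_sum, χ_zero, χ_one]; simp [hJ]; ring
      _ = ∑ a : ZMod 2, ∑ x ∈ Finset.univ.filter
            (fun x : Fin n → ZMod 2 => (∑ i, x i) = a),
            χ (∑ i, x i) * ∏ i, P i (x i, z i) := by
          refine Finset.sum_congr rfl fun a _ => ?_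
          rw [Finset.mul_sum]
          refine Finset.sum_congr rfl fun x hx => ?_
          rw [(Finset.mem_filter.1 hx).2]
      _ = ∑ x : Fin n → ZMod 2, χ (∑ i, x i) * ∏ i, P i (x i, z i) :=
          hfib fun x => χ (∑ i, x i) * ∏ i, P i (x i, z i)
      _ = ∑ x : Fin n → ZMod 2, ∏ i, χ (x i) * P i (x i, z i) := by
          refine Finset.sum_congr rfl fun x _ => ?_
          rw [Finset.prod_mul_distrib, ← χ_sum]
      _ = ∏ i, ∑ b : ZMod 2, χ b * P i (b, z i) :=
          (Fintype.prod_sum fun i b => χ b * P i (b, z i)).symm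
      _ = ∏ i, (P i (0, z i) - P i (1, z i)) :=
          Finset.prod_congr rfl fun i _ => (hterm i).symm
  -- conclude: both sides are products of ℓ¹ biases
  have hL : predAdv J = ∏ i, ∑ y : Y i, |P i (0, y) - P i (1, y)| := by
    rw [predAdv_eq J hJs]
    rw [Finset.sum_congr rfl fun z (_ : z ∈ Finset.univ) => by
      rw [hbias z, Finset.abs_prod]]
    exact (Fintype.prod_sum fun i y => |P i (0, y) - P i (1, y)|).symm
  have hR : ∀ i, predAdv (P i) = ∑ y : Y i, |P i (0, y) - P i (1, y)| :=
    fun i => predAdv_eq (P i) (hPs i)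
  rw [hL]
  exact le_of_eq (Finset.prod_congr rfl fun i _ => (hR i).symm)
end

section
/- Let P_U be uniform on {0,1} and P_{CX_0X_1} a distribution over {0,1}^3 such that Δ(P_{C X_1 X_0}, P_U × P_{X_1 X_0}) ≤ ε and Δ(P_{X_{1−C} X_C C}, P_U × P_{X_C C}) ≤ ε. Then Δ(P_{C X_0 X_1}, P_U × P_U × P_U) ≤ 4ε. -/
open Finset
set_option maxHeartbeats 4000000
set_option maxRecDepth 8000

lemma sumZ2 (f : ZMod 2 → ℝ) : ∑ x, f x = f 0 + f 1 := by
  rw [show (univ : Finset (ZMod 2)) = {0, 1} from rfl]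
  simp [Finset.sum_pair (show (0:ZMod 2) ≠ 1 by decide)]

lemma mean8 (x b c d e f g h : ℝ) (hs : x+b+c+d+e+f+g+h = 1) :
    |x - 1/8| ≤ (1/8)*(|x-b|+|x-c|+|x-d|+|x-e|+|x-f|+|x-g|+|x-h|) := by
  have hx : x - 1/8 = ((x-b)+(x-c)+(x-d)+(x-e)+(x-f)+(x-g)+(x-h))/8 := by linarith
  rw [hx, abs_div, show |(8:ℝ)| = 8 by norm_num]
  have a1 := abs_add_le (x-b) (x-c)
  have a2 := abs_add_le ((x-b)+(x-c)) (x-d)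
  have a3 := abs_add_le ((x-b)+(x-c)+(x-d)) (x-e)
  have a4 := abs_add_le ((x-b)+(x-c)+(x-d)+(x-e)) (x-f)
  have a5 := abs_add_le ((x-b)+(x-c)+(x-d)+(x-e)+(x-f)) (x-g)
  have a6 := abs_add_le ((x-b)+(x-c)+(x-d)+(x-e)+(x-f)+(x-g)) (x-h)
  linarith

/-- If `C` given `(X_1,X_0)` is `ε`-close to uniform and `X_{1−C}` given
`(X_C, C)` is `ε`-close to uniform, then `(C, X_0, X_1)` is `4ε`-close to
uniform.  Here `P (c, x₀, x₁)` is the joint distribution. -/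
theorem stmt_10 (P : ZMod 2 × ZMod 2 × ZMod 2 → ℝ) (ε : ℝ)
    (hP : ∀ a, 0 ≤ P a) (hPs : ∑ a, P a = 1)
    (h1 : (1/2) * ∑ a : ZMod 2 × ZMod 2 × ZMod 2,
        |P a - (1/2) * ∑ c : ZMod 2, P (c, a.2.1, a.2.2)| ≤ ε)
    (h2 : (1/2) * ∑ a : ZMod 2 × ZMod 2 × ZMod 2,
        |(if a.2.2 = 0 then P (0, a.2.1, a.1) else P (1, a.1, a.2.1))
          - (1/2) * ∑ b : ZMod 2,
              (if a.2.2 = 0 then P (0, a.2.1, b) else P (1, b, a.2.1))| ≤ ε) :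
    (1/2) * ∑ a : ZMod 2 × ZMod 2 × ZMod 2, |P a - 1/8| ≤ 4 * ε := by
  simp only [Fintype.sum_prod_type, sumZ2, show ((1:ZMod 2) = 0) = False by simp,
    if_true, if_false, eq_self_iff_true] at h1 h2 hPs ⊢
  have t1 : |P (0, 0, 0) - P (1, 0, 0)| ≤ |P (0, 0, 0) - 1 / 2 * (P (0, 0, 0) + P (1, 0, 0))| + |P (1, 0, 0) - 1 / 2 * (P (0, 0, 0) + P (1, 0, 0))| := by
    have u := abs_sub_le (P (0, 0, 0)) (1 / 2 * (P (0, 0, 0) + P (1, 0, 0))) (P (1, 0, 0))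
    have v := abs_sub_comm (1 / 2 * (P (0, 0, 0) + P (1, 0, 0))) (P (1, 0, 0))
    linarith
  have t2 : |P (0, 0, 1) - P (1, 0, 1)| ≤ |P (0, 0, 1) - 1 / 2 * (P (0, 0, 1) + P (1, 0, 1))| + |P (1, 0, 1) - 1 / 2 * (P (0, 0, 1) + P (1, 0, 1))| := by
    have u := abs_sub_le (P (0, 0, 1)) (1 / 2 * (P (0, 0, 1) + P (1, 0, 1))) (P (1, 0, 1))
    have v := abs_sub_comm (1 / 2 * (P (0, 0, 1) + P (1, 0, 1))) (P (1, 0, 1))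
    linarith
  have t3 : |P (0, 1, 0) - P (1, 1, 0)| ≤ |P (0, 1, 0) - 1 / 2 * (P (0, 1, 0) + P (1, 1, 0))| + |P (1, 1, 0) - 1 / 2 * (P (0, 1, 0) + P (1, 1, 0))| := by
    have u := abs_sub_le (P (0, 1, 0)) (1 / 2 * (P (0, 1, 0) + P (1, 1, 0))) (P (1, 1, 0))
    have v := abs_sub_comm (1 / 2 * (P (0, 1, 0) + P (1, 1, 0))) (P (1, 1, 0))
    linarith
  have t4 : |P (0, 1, 1) - P (1, 1, 1)| ≤ |P (0, 1, 1) - 1 / 2 * (P (0, 1, 1) + P (1, 1, 1))| + |P (1, 1, 1) - 1 / 2 * (P (0, 1, 1) + P (1, 1, 1))| := by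
    have u := abs_sub_le (P (0, 1, 1)) (1 / 2 * (P (0, 1, 1) + P (1, 1, 1))) (P (1, 1, 1))
    have v := abs_sub_comm (1 / 2 * (P (0, 1, 1) + P (1, 1, 1))) (P (1, 1, 1))
    linarith
  have t5 : |P (0, 0, 0) - P (0, 0, 1)| ≤ |P (0, 0, 0) - 1 / 2 * (P (0, 0, 0) + P (0, 0, 1))| + |P (0, 0, 1) - 1 / 2 * (P (0, 0, 0) + P (0, 0, 1))| := by
    have u := abs_sub_le (P (0, 0, 0)) (1 / 2 * (P (0, 0, 0) + P (0, 0, 1))) (P (0, 0, 1))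
    have v := abs_sub_comm (1 / 2 * (P (0, 0, 0) + P (0, 0, 1))) (P (0, 0, 1))
    linarith
  have t6 : |P (0, 1, 0) - P (0, 1, 1)| ≤ |P (0, 1, 0) - 1 / 2 * (P (0, 1, 0) + P (0, 1, 1))| + |P (0, 1, 1) - 1 / 2 * (P (0, 1, 0) + P (0, 1, 1))| := by
    have u := abs_sub_le (P (0, 1, 0)) (1 / 2 * (P (0, 1, 0) + P (0, 1, 1))) (P (0, 1, 1))
    have v := abs_sub_comm (1 / 2 * (P (0, 1, 0) + P (0, 1, 1))) (P (0, 1, 1))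
    linarith
  have t7 : |P (1, 0, 0) - P (1, 1, 0)| ≤ |P (1, 0, 0) - 1 / 2 * (P (1, 0, 0) + P (1, 1, 0))| + |P (1, 1, 0) - 1 / 2 * (P (1, 0, 0) + P (1, 1, 0))| := by
    have u := abs_sub_le (P (1, 0, 0)) (1 / 2 * (P (1, 0, 0) + P (1, 1, 0))) (P (1, 1, 0))
    have v := abs_sub_comm (1 / 2 * (P (1, 0, 0) + P (1, 1, 0))) (P (1, 1, 0))
    linarith
  have t8 : |P (1, 0, 1) - P (1, 1, 1)| ≤ |P (1, 0, 1) - 1 / 2 * (P (1, 0, 1) + P (1, 1, 1))| + |P (1, 1, 1) - 1 / 2 * (P (1, 0, 1) + P (1, 1, 1))| := by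
    have u := abs_sub_le (P (1, 0, 1)) (1 / 2 * (P (1, 0, 1) + P (1, 1, 1))) (P (1, 1, 1))
    have v := abs_sub_comm (1 / 2 * (P (1, 0, 1) + P (1, 1, 1))) (P (1, 1, 1))
    linarith
  have cab : |P (0, 0, 0) - P (0, 0, 1)| = |P (0, 0, 1) - P (0, 0, 0)| := abs_sub_comm _ _
  have cac : |P (0, 0, 0) - P (0, 1, 0)| = |P (0, 1, 0) - P (0, 0, 0)| := abs_sub_comm _ _
  have cad : |P (0, 0, 0) - P (0, 1, 1)| = |P (0, 1, 1) - P (0, 0, 0)| := abs_sub_comm _ _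
  have cae : |P (0, 0, 0) - P (1, 0, 0)| = |P (1, 0, 0) - P (0, 0, 0)| := abs_sub_comm _ _
  have caf : |P (0, 0, 0) - P (1, 0, 1)| = |P (1, 0, 1) - P (0, 0, 0)| := abs_sub_comm _ _
  have cag : |P (0, 0, 0) - P (1, 1, 0)| = |P (1, 1, 0) - P (0, 0, 0)| := abs_sub_comm _ _
  have cah : |P (0, 0, 0) - P (1, 1, 1)| = |P (1, 1, 1) - P (0, 0, 0)| := abs_sub_comm _ _
  have cbc : |P (0, 0, 1) - P (0, 1, 0)| = |P (0, 1, 0) - P (0, 0, 1)| := abs_sub_comm _ _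
  have cbd : |P (0, 0, 1) - P (0, 1, 1)| = |P (0, 1, 1) - P (0, 0, 1)| := abs_sub_comm _ _
  have cbe : |P (0, 0, 1) - P (1, 0, 0)| = |P (1, 0, 0) - P (0, 0, 1)| := abs_sub_comm _ _
  have cbf : |P (0, 0, 1) - P (1, 0, 1)| = |P (1, 0, 1) - P (0, 0, 1)| := abs_sub_comm _ _
  have cbg : |P (0, 0, 1) - P (1, 1, 0)| = |P (1, 1, 0) - P (0, 0, 1)| := abs_sub_comm _ _
  have cbh : |P (0, 0, 1) - P (1, 1, 1)| = |P (1, 1, 1) - P (0, 0, 1)| := abs_sub_comm _ _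
  have ccd : |P (0, 1, 0) - P (0, 1, 1)| = |P (0, 1, 1) - P (0, 1, 0)| := abs_sub_comm _ _
  have cce : |P (0, 1, 0) - P (1, 0, 0)| = |P (1, 0, 0) - P (0, 1, 0)| := abs_sub_comm _ _
  have ccf : |P (0, 1, 0) - P (1, 0, 1)| = |P (1, 0, 1) - P (0, 1, 0)| := abs_sub_comm _ _
  have ccg : |P (0, 1, 0) - P (1, 1, 0)| = |P (1, 1, 0) - P (0, 1, 0)| := abs_sub_comm _ _
  have cch : |P (0, 1, 0) - P (1, 1, 1)| = |P (1, 1, 1) - P (0, 1, 0)| := abs_sub_comm _ _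
  have cde : |P (0, 1, 1) - P (1, 0, 0)| = |P (1, 0, 0) - P (0, 1, 1)| := abs_sub_comm _ _
  have cdf : |P (0, 1, 1) - P (1, 0, 1)| = |P (1, 0, 1) - P (0, 1, 1)| := abs_sub_comm _ _
  have cdg : |P (0, 1, 1) - P (1, 1, 0)| = |P (1, 1, 0) - P (0, 1, 1)| := abs_sub_comm _ _
  have cdh : |P (0, 1, 1) - P (1, 1, 1)| = |P (1, 1, 1) - P (0, 1, 1)| := abs_sub_comm _ _
  have cef : |P (1, 0, 0) - P (1, 0, 1)| = |P (1, 0, 1) - P (1, 0, 0)| := abs_sub_comm _ _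
  have ceg : |P (1, 0, 0) - P (1, 1, 0)| = |P (1, 1, 0) - P (1, 0, 0)| := abs_sub_comm _ _
  have ceh : |P (1, 0, 0) - P (1, 1, 1)| = |P (1, 1, 1) - P (1, 0, 0)| := abs_sub_comm _ _
  have cfg : |P (1, 0, 1) - P (1, 1, 0)| = |P (1, 1, 0) - P (1, 0, 1)| := abs_sub_comm _ _
  have cfh : |P (1, 0, 1) - P (1, 1, 1)| = |P (1, 1, 1) - P (1, 0, 1)| := abs_sub_comm _ _
  have cgh : |P (1, 1, 0) - P (1, 1, 1)| = |P (1, 1, 1) - P (1, 1, 0)| := abs_sub_comm _ _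
  have tr1 : |P (0, 0, 0) - P (1, 0, 1)| ≤ |P (0, 0, 0) - P (0, 0, 1)| + |P (0, 0, 1) - P (1, 0, 1)| := abs_sub_le _ _ _
  have tr2 : |P (0, 0, 0) - P (1, 1, 1)| ≤ |P (0, 0, 0) - P (1, 0, 1)| + |P (1, 0, 1) - P (1, 1, 1)| := abs_sub_le _ _ _
  have tr3 : |P (0, 0, 0) - P (0, 1, 1)| ≤ |P (0, 0, 0) - P (1, 1, 1)| + |P (1, 1, 1) - P (0, 1, 1)| := abs_sub_le _ _ _
  have tr4 : |P (0, 0, 0) - P (1, 1, 0)| ≤ |P (0, 0, 0) - P (1, 0, 0)| + |P (1, 0, 0) - P (1, 1, 0)| := abs_sub_le _ _ _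
  have tr5 : |P (0, 0, 0) - P (0, 1, 0)| ≤ |P (0, 0, 0) - P (1, 1, 0)| + |P (1, 1, 0) - P (0, 1, 0)| := abs_sub_le _ _ _
  have tr6 : |P (0, 0, 1) - P (1, 1, 1)| ≤ |P (0, 0, 1) - P (1, 0, 1)| + |P (1, 0, 1) - P (1, 1, 1)| := abs_sub_le _ _ _
  have tr7 : |P (0, 0, 1) - P (0, 1, 1)| ≤ |P (0, 0, 1) - P (1, 1, 1)| + |P (1, 1, 1) - P (0, 1, 1)| := abs_sub_le _ _ _
  have tr8 : |P (0, 0, 1) - P (0, 1, 0)| ≤ |P (0, 0, 1) - P (0, 1, 1)| + |P (0, 1, 1) - P (0, 1, 0)| := abs_sub_le _ _ _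
  have tr9 : |P (0, 0, 1) - P (1, 0, 0)| ≤ |P (0, 0, 1) - P (0, 0, 0)| + |P (0, 0, 0) - P (1, 0, 0)| := abs_sub_le _ _ _
  have tr10 : |P (0, 0, 1) - P (1, 1, 0)| ≤ |P (0, 0, 1) - P (1, 0, 0)| + |P (1, 0, 0) - P (1, 1, 0)| := abs_sub_le _ _ _
  have tr11 : |P (1, 0, 1) - P (0, 1, 1)| ≤ |P (1, 0, 1) - P (1, 1, 1)| + |P (1, 1, 1) - P (0, 1, 1)| := abs_sub_le _ _ _
  have tr12 : |P (1, 0, 1) - P (0, 1, 0)| ≤ |P (1, 0, 1) - P (0, 1, 1)| + |P (0, 1, 1) - P (0, 1, 0)| := abs_sub_le _ _ _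
  have tr13 : |P (1, 0, 1) - P (1, 1, 0)| ≤ |P (1, 0, 1) - P (0, 1, 0)| + |P (0, 1, 0) - P (1, 1, 0)| := abs_sub_le _ _ _
  have tr14 : |P (1, 0, 1) - P (0, 0, 0)| ≤ |P (1, 0, 1) - P (0, 0, 1)| + |P (0, 0, 1) - P (0, 0, 0)| := abs_sub_le _ _ _
  have tr15 : |P (1, 0, 1) - P (1, 0, 0)| ≤ |P (1, 0, 1) - P (0, 0, 0)| + |P (0, 0, 0) - P (1, 0, 0)| := abs_sub_le _ _ _
  have tr16 : |P (1, 1, 1) - P (0, 1, 0)| ≤ |P (1, 1, 1) - P (0, 1, 1)| + |P (0, 1, 1) - P (0, 1, 0)| := abs_sub_le _ _ _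
  have tr17 : |P (1, 1, 1) - P (1, 1, 0)| ≤ |P (1, 1, 1) - P (0, 1, 0)| + |P (0, 1, 0) - P (1, 1, 0)| := abs_sub_le _ _ _
  have tr18 : |P (1, 1, 1) - P (1, 0, 0)| ≤ |P (1, 1, 1) - P (1, 1, 0)| + |P (1, 1, 0) - P (1, 0, 0)| := abs_sub_le _ _ _
  have tr19 : |P (1, 1, 1) - P (0, 0, 1)| ≤ |P (1, 1, 1) - P (1, 0, 1)| + |P (1, 0, 1) - P (0, 0, 1)| := abs_sub_le _ _ _
  have tr20 : |P (1, 1, 1) - P (0, 0, 0)| ≤ |P (1, 1, 1) - P (0, 0, 1)| + |P (0, 0, 1) - P (0, 0, 0)| := abs_sub_le _ _ _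
  have tr21 : |P (0, 1, 1) - P (1, 1, 0)| ≤ |P (0, 1, 1) - P (0, 1, 0)| + |P (0, 1, 0) - P (1, 1, 0)| := abs_sub_le _ _ _
  have tr22 : |P (0, 1, 1) - P (1, 0, 0)| ≤ |P (0, 1, 1) - P (1, 1, 0)| + |P (1, 1, 0) - P (1, 0, 0)| := abs_sub_le _ _ _
  have tr23 : |P (0, 1, 1) - P (0, 0, 0)| ≤ |P (0, 1, 1) - P (1, 0, 0)| + |P (1, 0, 0) - P (0, 0, 0)| := abs_sub_le _ _ _
  have tr24 : |P (0, 1, 1) - P (1, 0, 1)| ≤ |P (0, 1, 1) - P (1, 1, 1)| + |P (1, 1, 1) - P (1, 0, 1)| := abs_sub_le _ _ _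
  have tr25 : |P (0, 1, 1) - P (0, 0, 1)| ≤ |P (0, 1, 1) - P (1, 0, 1)| + |P (1, 0, 1) - P (0, 0, 1)| := abs_sub_le _ _ _
  have tr26 : |P (0, 1, 0) - P (1, 0, 0)| ≤ |P (0, 1, 0) - P (1, 1, 0)| + |P (1, 1, 0) - P (1, 0, 0)| := abs_sub_le _ _ _
  have tr27 : |P (0, 1, 0) - P (0, 0, 0)| ≤ |P (0, 1, 0) - P (1, 0, 0)| + |P (1, 0, 0) - P (0, 0, 0)| := abs_sub_le _ _ _
  have tr28 : |P (0, 1, 0) - P (0, 0, 1)| ≤ |P (0, 1, 0) - P (0, 0, 0)| + |P (0, 0, 0) - P (0, 0, 1)| := abs_sub_le _ _ _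
  have tr29 : |P (0, 1, 0) - P (1, 1, 1)| ≤ |P (0, 1, 0) - P (0, 1, 1)| + |P (0, 1, 1) - P (1, 1, 1)| := abs_sub_le _ _ _
  have tr30 : |P (0, 1, 0) - P (1, 0, 1)| ≤ |P (0, 1, 0) - P (1, 1, 1)| + |P (1, 1, 1) - P (1, 0, 1)| := abs_sub_le _ _ _
  have tr31 : |P (1, 1, 0) - P (0, 0, 0)| ≤ |P (1, 1, 0) - P (1, 0, 0)| + |P (1, 0, 0) - P (0, 0, 0)| := abs_sub_le _ _ _
  have tr32 : |P (1, 1, 0) - P (0, 0, 1)| ≤ |P (1, 1, 0) - P (0, 0, 0)| + |P (0, 0, 0) - P (0, 0, 1)| := abs_sub_le _ _ _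
  have tr33 : |P (1, 1, 0) - P (1, 0, 1)| ≤ |P (1, 1, 0) - P (0, 0, 1)| + |P (0, 0, 1) - P (1, 0, 1)| := abs_sub_le _ _ _
  have tr34 : |P (1, 1, 0) - P (0, 1, 1)| ≤ |P (1, 1, 0) - P (0, 1, 0)| + |P (0, 1, 0) - P (0, 1, 1)| := abs_sub_le _ _ _
  have tr35 : |P (1, 1, 0) - P (1, 1, 1)| ≤ |P (1, 1, 0) - P (0, 1, 1)| + |P (0, 1, 1) - P (1, 1, 1)| := abs_sub_le _ _ _
  have tr36 : |P (1, 0, 0) - P (0, 0, 1)| ≤ |P (1, 0, 0) - P (0, 0, 0)| + |P (0, 0, 0) - P (0, 0, 1)| := abs_sub_le _ _ _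
  have tr37 : |P (1, 0, 0) - P (1, 0, 1)| ≤ |P (1, 0, 0) - P (0, 0, 1)| + |P (0, 0, 1) - P (1, 0, 1)| := abs_sub_le _ _ _
  have tr38 : |P (1, 0, 0) - P (1, 1, 1)| ≤ |P (1, 0, 0) - P (1, 0, 1)| + |P (1, 0, 1) - P (1, 1, 1)| := abs_sub_le _ _ _
  have tr39 : |P (1, 0, 0) - P (0, 1, 0)| ≤ |P (1, 0, 0) - P (1, 1, 0)| + |P (1, 1, 0) - P (0, 1, 0)| := abs_sub_le _ _ _
  have tr40 : |P (1, 0, 0) - P (0, 1, 1)| ≤ |P (1, 0, 0) - P (0, 1, 0)| + |P (0, 1, 0) - P (0, 1, 1)| := abs_sub_le _ _ _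
  have ma := mean8 (P (0, 0, 0)) (P (0, 0, 1)) (P (0, 1, 0)) (P (0, 1, 1)) (P (1, 0, 0)) (P (1, 0, 1)) (P (1, 1, 0)) (P (1, 1, 1)) (by linarith)
  have mb := mean8 (P (0, 0, 1)) (P (0, 0, 0)) (P (0, 1, 0)) (P (0, 1, 1)) (P (1, 0, 0)) (P (1, 0, 1)) (P (1, 1, 0)) (P (1, 1, 1)) (by linarith)
  have mc := mean8 (P (0, 1, 0)) (P (0, 0, 0)) (P (0, 0, 1)) (P (0, 1, 1)) (P (1, 0, 0)) (P (1, 0, 1)) (P (1, 1, 0)) (P (1, 1, 1)) (by linarith)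
  have md := mean8 (P (0, 1, 1)) (P (0, 0, 0)) (P (0, 0, 1)) (P (0, 1, 0)) (P (1, 0, 0)) (P (1, 0, 1)) (P (1, 1, 0)) (P (1, 1, 1)) (by linarith)
  have me := mean8 (P (1, 0, 0)) (P (0, 0, 0)) (P (0, 0, 1)) (P (0, 1, 0)) (P (0, 1, 1)) (P (1, 0, 1)) (P (1, 1, 0)) (P (1, 1, 1)) (by linarith)
  have mf := mean8 (P (1, 0, 1)) (P (0, 0, 0)) (P (0, 0, 1)) (P (0, 1, 0)) (P (0, 1, 1)) (P (1, 0, 0)) (P (1, 1, 0)) (P (1, 1, 1)) (by linarith)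
  have mg := mean8 (P (1, 1, 0)) (P (0, 0, 0)) (P (0, 0, 1)) (P (0, 1, 0)) (P (0, 1, 1)) (P (1, 0, 0)) (P (1, 0, 1)) (P (1, 1, 1)) (by linarith)
  have mh := mean8 (P (1, 1, 1)) (P (0, 0, 0)) (P (0, 0, 1)) (P (0, 1, 0)) (P (0, 1, 1)) (P (1, 0, 0)) (P (1, 0, 1)) (P (1, 1, 0)) (by linarith)
  linarith
end

section
/- Let P_{X_0 X_1} be a distribution over {0,1}^2. There exists a conditional distribution P_{C|X_0 X_1} over {0,1} such that X_{1−C} is uniform and independent of (C, X_C) if and only if X_0 ⊕ X_1 is uniformly distributed. -/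
open Finset

lemma key_aux {a u : ℝ} (hu : 0 ≤ u) (hua : u ≤ a) : a * (u / a) = u := by
  rcases eq_or_ne a 0 with h | h
  · simp [h]; linarith
  · field_simp

/-- For bits `(X₀, X₁)` with joint distribution `P`, there exists a conditional
distribution for `C` (with `γ (x₀,x₁)` the probability of `C = 1`) such that
`X_{1−C}` is uniform and independent of `(X_C, C)` if and only if `X₀ ⊕ X₁` is
uniformly distributed.  The joint probability of `(X_{1−C} = b, X_C = x, C = c)`
is `P (x, b) * (1 − γ (x, b))` for `c = 0` and `P (b, x) * γ (b, x)` for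
`c = 1`. -/
theorem stmt_11 (P : ZMod 2 × ZMod 2 → ℝ)
    (hP : ∀ a, 0 ≤ P a) (hPs : ∑ a, P a = 1) :
    (∃ γ : ZMod 2 × ZMod 2 → ℝ, (∀ a, 0 ≤ γ a) ∧ (∀ a, γ a ≤ 1) ∧
      ∀ b x c : ZMod 2,
        (if c = 0 then P (x, b) * (1 - γ (x, b)) else P (b, x) * γ (b, x)) =
          (1/2) * ∑ b' : ZMod 2,
            (if c = 0 then P (x, b') * (1 - γ (x, b')) else P (b', x) * γ (b', x)))
    ↔ P (0, 1) + P (1, 0) = 1/2 := by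
  have e : ∀ f : ZMod 2 → ℝ, ∑ b', f b' = f 0 + f 1 := fun f => Fin.sum_univ_two f
  have hPs' : P (0,0) + P (0,1) + P (1,0) + P (1,1) = 1 := by
    rw [Fintype.sum_prod_type, e, e, e] at hPs; linarith
  constructor
  · rintro ⟨γ, -, -, h⟩
    have h00 := h 0 0 0
    have h01 := h 0 1 0
    have h10 := h 0 0 1
    have h11 := h 0 1 1
    simp only [e, show ((0:ZMod 2) = 0) = True from by simp,
      show ((1:ZMod 2) = 0) = False from by simp, if_true, if_false]
      at h00 h01 h10 h11
    linarith [h00, h01, h10, h11, hPs']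
  · intro hbc
    have ha := hP (0,0); have hb := hP (0,1); have hc := hP (1,0); have hd := hP (1,1)
    set u : ℝ := max (P (0,0) - P (0,1)) 0 with hu_def
    set v : ℝ := max (P (0,1) - P (0,0)) 0 with hv_def
    have hu0 : 0 ≤ u := le_max_right _ _
    have hv0 : 0 ≤ v := le_max_right _ _
    have huv : u - v = P (0,0) - P (0,1) := by
      rcases le_total (P (0,0)) (P (0,1)) with h | h
      · rw [hu_def, hv_def, max_eq_right (by linarith), max_eq_left (by linarith)]; ring
      · rw [hu_def, hv_def, max_eq_left (by linarith), max_eq_right (by linarith)]; ring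
    have hua : u ≤ P (0,0) := max_le (by linarith) ha
    have huc : u ≤ P (1,0) := max_le (by linarith) hc
    have hvb : v ≤ P (0,1) := max_le (by linarith) hb
    have hvd : v ≤ P (1,1) := max_le (by linarith) hd
    refine ⟨fun p => if p = (0,0) then u / P (0,0) else if p = (1,0) then u / P (1,0)
        else if p = (0,1) then v / P (0,1) else v / P (1,1), ?_, ?_, ?_⟩
    · intro p
      dsimp only
      split_ifs <;> exact div_nonneg (by assumption) (hP _)
    · intro p
      dsimp only
      split_ifs <;> exact div_le_one_of_le₀ (by assumption) (hP _)
    · have A0 : P (0,0) * (1 - u / P (0,0)) = P (0,0) - u := by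
        rw [mul_sub, mul_one, key_aux hu0 hua]
      have A1 : P (1,0) * (1 - u / P (1,0)) = P (1,0) - u := by
        rw [mul_sub, mul_one, key_aux hu0 huc]
      have B0 : P (0,1) * (1 - v / P (0,1)) = P (0,1) - v := by
        rw [mul_sub, mul_one, key_aux hv0 hvb]
      have B1 : P (1,1) * (1 - v / P (1,1)) = P (1,1) - v := by
        rw [mul_sub, mul_one, key_aux hv0 hvd]
      have C0 : P (0,0) * (u / P (0,0)) = u := key_aux hu0 hua
      have C1 : P (1,0) * (u / P (1,0)) = u := key_aux hu0 huc
      have D0 : P (0,1) * (v / P (0,1)) = v := key_aux hv0 hvb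
      have D1 : P (1,1) * (v / P (1,1)) = v := key_aux hv0 hvd
      have hz : ∀ z : ZMod 2, z = 0 ∨ z = 1 := by decide
      have t00 : ((0:ZMod 2) = 0) = True := by simp
      have t10 : ((1:ZMod 2) = 0) = False := by simp
      have t01 : ((0:ZMod 2) = 1) = False := by simp
      have t11 : ((1:ZMod 2) = 1) = True := by simp
      intro b x c
      rcases hz b with rfl | rfl <;> rcases hz x with rfl | rfl <;>
          rcases hz c with rfl | rfl <;>
        simp only [e, Prod.mk.injEq, t00, t10, t01, t11,
          if_true, if_false, true_and, and_true, false_and, and_false] <;>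
        simp only [A0, A1, B0, B1, C0, C1, D0, D1] <;> linarith
end

section
/- (Leftover hash lemma) Let X be a random variable over a finite set X with min-entropy H_∞(X) ≥ m + 2 log(1/ε), and let h : S × X → {0,1}^m be a 2-universal hash function. If S is uniform over S and independent of X, then (h(S,X), S) is ε-close (in statistical distance) to (U, S), where U is uniform over {0,1}^m and independent of S. -/
/-!
Two independent samples of `(h(S,X), S)` collide only if the seeds agree (probability `1/|S|`)
and then either the two copies of `X` agree (probability at most `max P ≤ ε² / 2^m`) or they
differ and still hash alike (probability at most `2^{-m}` by universality). So the collision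
probability is at most `(1 + ε²) / N` with `N = 2^m |S|`. The squared `L²` distance of a
distribution on `N` points from uniform is its collision probability minus `1/N`, hence at most
`ε² / N`, and Cauchy–Schwarz turns this into an `L¹` distance of at most `ε`.
-/

open Finset

theorem sq_sum_abs_sub_inv_card_le {α : Type*} [Fintype α] {f : α → ℝ} (hf : ∑ a, f a = 1) :
    (∑ a, |f a - 1 / Fintype.card α|) ^ 2 ≤ Fintype.card α * ∑ a, f a ^ 2 - 1 := by
  have hN : (Fintype.card α : ℝ) ≠ 0 := by
    intro h0
    have : IsEmpty α := Fintype.card_eq_zero_iff.mp (by exact_mod_cast h0)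
    simp at hf
  have hvar : ∑ a, (f a - 1 / Fintype.card α) ^ 2 = ∑ a, f a ^ 2 - 1 / Fintype.card α := by
    simp only [sub_sq, sum_add_distrib, sum_sub_distrib, ← sum_mul, ← mul_sum, hf, sum_const,
      card_univ, nsmul_eq_mul]
    field_simp
    ring
  calc (∑ a, |f a - 1 / Fintype.card α|) ^ 2
      ≤ Fintype.card α * ∑ a, |f a - 1 / Fintype.card α| ^ 2 := by
        simpa using sq_sum_le_card_mul_sum_sq (s := univ) (f := fun a => |f a - 1 / Fintype.card α|)
    _ = Fintype.card α * ∑ a, f a ^ 2 - 1 := by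
        simp only [sq_abs, hvar]
        field_simp

theorem sum_sum_mul_mul_le {X : Type*} [Fintype X] {P : X → ℝ} {c : X → X → ℝ} {p b : ℝ}
    (hP : ∀ x, 0 ≤ P x) (hPs : ∑ x, P x = 1) (hp : ∀ x, P x ≤ p) (hdiag : ∀ x, c x x ≤ 1)
    (hoff : ∀ x x', x ≠ x' → c x x' ≤ b) (hb : 0 ≤ b) :
    ∑ x, ∑ x', P x * P x' * c x x' ≤ p + b := by
  classical
  have hrow : ∀ x, ∑ x', P x * P x' * c x x' ≤ P x * (p + b) := fun x => by
    have hself : P x * P x * c x x ≤ P x * p := by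
      have := mul_le_mul_of_nonneg_left (hdiag x) (mul_nonneg (hP x) (hP x))
      nlinarith [hp x, hP x]
    have hrest : ∑ x' ∈ univ.erase x, P x * P x' * c x x' ≤ P x * b :=
      calc ∑ x' ∈ univ.erase x, P x * P x' * c x x'
          ≤ ∑ x' ∈ univ.erase x, P x * P x' * b := sum_le_sum fun x' hx' =>
            mul_le_mul_of_nonneg_left (hoff x x' (ne_of_mem_erase hx').symm)
              (mul_nonneg (hP x) (hP x'))
        _ ≤ ∑ x', P x * P x' * b := sum_le_sum_of_subset_of_nonneg (subset_univ _)
            fun x' _ _ => mul_nonneg (mul_nonneg (hP x) (hP x')) hb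
        _ = P x * b := by rw [← sum_mul, ← mul_sum, hPs, mul_one]
    rw [← add_sum_erase _ _ (mem_univ x)]
    linarith
  calc ∑ x, ∑ x', P x * P x' * c x x' ≤ ∑ x, P x * (p + b) := sum_le_sum fun x _ => hrow x
    _ = p + b := by rw [← sum_mul, hPs, one_mul]

theorem sum_sq_sum_fiber {X V : Type*} [Fintype X] [Fintype V] [DecidableEq V]
    (P : X → ℝ) (g : X → V) :
    ∑ v, (∑ x ∈ univ.filter (fun x => g x = v), P x) ^ 2
      = ∑ x, ∑ x', if g x = g x' then P x * P x' else 0 := by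
  rw [← sum_fiberwise univ g (fun x => ∑ x', if g x = g x' then P x * P x' else 0)]
  refine sum_congr rfl fun v _ => ?_
  rw [sq, sum_mul_sum]
  refine sum_congr rfl fun x hx => ?_
  simp only [(mem_filter.1 hx).2, sum_filter, eq_comm]

section Hash

variable {X S V : Type*} [Fintype S] [DecidableEq V]

/-- The law of `(h(S,X), S)` for `X ∼ P` and an independent uniform seed `S`. -/
noncomputable def hashJoint [Fintype X] (P : X → ℝ) (h : S → X → V) (vs : V × S) : ℝ :=
  (1 / Fintype.card S) * ∑ x ∈ univ.filter (fun x => h vs.2 x = vs.1), P x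

noncomputable def collisionProb (h : S → X → V) (x x' : X) : ℝ :=
  ((univ.filter (fun s => h s x = h s x')).card : ℝ) / Fintype.card S

theorem collisionProb_self [Nonempty S] (h : S → X → V) (x : X) : collisionProb h x x = 1 := by
  simp [collisionProb]

theorem sum_hashJoint [Fintype X] [Fintype V] [Nonempty S] {P : X → ℝ} (hPs : ∑ x, P x = 1)
    (h : S → X → V) : ∑ vs, hashJoint P h vs = 1 := by
  simp only [hashJoint, Fintype.sum_prod_type_right, ← mul_sum, sum_fiberwise, hPs]
  simp

theorem sum_hashJoint_sq [Fintype X] [Fintype V] (P : X → ℝ) (h : S → X → V) :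
    ∑ vs, hashJoint P h vs ^ 2
      = (1 / Fintype.card S) * ∑ x, ∑ x', P x * P x' * collisionProb h x x' := by
  simp only [hashJoint, collisionProb, mul_pow, Fintype.sum_prod_type_right, ← mul_sum,
    sum_sq_sum_fiber]
  have hcount : ∀ x x', ∑ s, (if h s x = h s x' then P x * P x' else 0)
      = (univ.filter (fun s => h s x = h s x')).card * (P x * P x') := fun x x' => by
    rw [← sum_filter, sum_const, nsmul_eq_mul]
  rw [sum_comm, mul_sum, mul_sum]
  refine sum_congr rfl fun x _ => ?_
  rw [sum_comm, mul_sum, mul_sum]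
  refine sum_congr rfl fun x' _ => ?_
  rw [hcount]
  ring

end Hash

/-- The min-entropy bound `H_∞(X) ≥ m + 2 log(1/ε)` appears as `P x ≤ ε² / 2^m`. -/
theorem stmt_12 {X S : Type*} [Fintype X] [Fintype S] [Nonempty S]
    {m : ℕ} (P : X → ℝ) (h : S → X → (Fin m → Bool)) (ε : ℝ)
    (hP : ∀ x, 0 ≤ P x) (hPs : ∑ x, P x = 1) (hε : 0 < ε)
    (hmin : ∀ x, P x ≤ ε ^ 2 / 2 ^ m)
    (huniv : ∀ x x', x ≠ x' →
      ((Finset.univ.filter (fun s => h s x = h s x')).card : ℝ) / (Fintype.card S)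
        ≤ 1 / 2 ^ m) :
    (1/2) * ∑ vs : (Fin m → Bool) × S,
        |(1 / (Fintype.card S : ℝ))
            * ∑ x ∈ Finset.univ.filter (fun x => h vs.2 x = vs.1), P x
          - 1 / ((2 ^ m : ℝ) * (Fintype.card S : ℝ))|
      ≤ ε := by
  have hcoll : ∑ vs, hashJoint P h vs ^ 2 ≤ (1 + ε ^ 2) / (2 ^ m * Fintype.card S) := by
    rw [sum_hashJoint_sq]
    calc 1 / (Fintype.card S : ℝ) * ∑ x, ∑ x', P x * P x' * collisionProb h x x'
        ≤ 1 / Fintype.card S * (ε ^ 2 / 2 ^ m + 1 / 2 ^ m) := by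
          gcongr
          exact sum_sum_mul_mul_le hP hPs hmin (fun x => (collisionProb_self h x).le) huniv
            (by positivity)
      _ = (1 + ε ^ 2) / (2 ^ m * Fintype.card S) := by
          field_simp
          ring
  have hdist : (∑ vs, |hashJoint P h vs - 1 / (2 ^ m * Fintype.card S)|) ^ 2 ≤ ε ^ 2 := by
    have hL2 := sq_sum_abs_sub_inv_card_le (sum_hashJoint hPs h)
    have hcard : (Fintype.card ((Fin m → Bool) × S) : ℝ) = 2 ^ m * Fintype.card S := by simp
    rw [hcard] at hL2
    refine hL2.trans ?_
    calc 2 ^ m * Fintype.card S * ∑ vs, hashJoint P h vs ^ 2 - 1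
        ≤ 2 ^ m * Fintype.card S * ((1 + ε ^ 2) / (2 ^ m * Fintype.card S)) - 1 := by gcongr
      _ = ε ^ 2 := by
          field_simp
          ring
  change 1 / 2 * ∑ vs, |hashJoint P h vs - _| ≤ ε
  linarith [le_of_pow_le_pow_left₀ two_ne_zero hε.le hdist]
end

section
/- (Distributed leftover hash lemma) Let (X,Y) be jointly distributed over X × Y, and let g : S × X → {0,1}^m and h : R × Y → {0,1}^n be 2-universal hash functions. If m ≤ H_∞(X) − 2 log(1/ε), n ≤ H_∞(Y) − 2 log(1/ε), and m + n ≤ H_∞(X,Y) − 2 log(1/ε), then for (S,R) uniform over S × R and independent of (X,Y), the tuple (g(S,X), h(R,Y), S, R) is (√3/2)·ε-close to (U_m, U_n, S, R), where U_m, U_n are independent uniform strings. -/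
/-!
A collision-probability argument. For a distribution `q` on a finite set `T`, Cauchy–Schwarz
gives `(∑ |q t - 1/|T||)² ≤ |T| ∑ q t² - 1`. Averaged over the seeds, the collision probability
of `(g(S,X), h(R,Y))` for two independent draws `(x,y), (x',y')` of `P` is, by universality, at
most `∑ w · P(x,y) P(x',y')` with weight `w = 1, 2⁻ⁿ, 2⁻ᵐ, 2⁻ᵐ⁻ⁿ` according as both, only the
first, only the second, or neither coordinate agree. Bounding `w` by
`[(x,y) = (x',y')] + 2⁻ⁿ [x = x'] + 2⁻ᵐ [y = y'] + 2⁻ᵐ⁻ⁿ`, the three min-entropy bounds (each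
collision probability is at most the largest point mass) give `|T| ∑ q t² ≤ 1 + 3ε²`, so the
statistical distance is at most `√3 ε / 2`.
-/

open Finset

section Collision

variable {A B : Type*} [Fintype A] [DecidableEq B]

def collision (P : A → ℝ) (F : A → B) : ℝ :=
  ∑ a, ∑ a', if F a = F a' then P a * P a' else 0

lemma collision_eq_sum_sq [Fintype B] (P : A → ℝ) (F : A → B) :
    collision P F = ∑ b, (∑ a with F a = b, P a) ^ 2 := by
  simp only [sq, Finset.sum_mul_sum, sum_filter]
  rw [Finset.sum_comm]
  refine sum_congr rfl fun a _ => ?_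
  rw [Finset.sum_comm]
  refine sum_congr rfl fun a' _ => ?_
  simp

lemma collision_le_of_fiber_le [Fintype B] {P : A → ℝ} (hP : ∀ a, 0 ≤ P a)
    (hPs : ∑ a, P a = 1) (F : A → B) {M : ℝ} (hM : ∀ b, ∑ a with F a = b, P a ≤ M) :
    collision P F ≤ M := by
  rw [collision_eq_sum_sq]
  calc ∑ b, (∑ a with F a = b, P a) ^ 2 ≤ ∑ b, M * ∑ a with F a = b, P a := by
        gcongr with b
        rw [sq]
        exact mul_le_mul_of_nonneg_right (hM b) (sum_nonneg fun a _ => hP a)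
    _ = M := by rw [← mul_sum, sum_fiberwise, hPs, mul_one]

end Collision

section Product

variable {X Y : Type*} [DecidableEq X] [DecidableEq Y]

lemma collision_weight_le {α β : ℝ} (hα : 0 ≤ α) (hβ : 0 ≤ β) (a a' : X × Y) :
    (if a.1 = a'.1 then 1 else α) * (if a.2 = a'.2 then 1 else β)
      ≤ (if a = a' then 1 else 0) + β * (if a.1 = a'.1 then 1 else 0)
        + α * (if a.2 = a'.2 then 1 else 0) + α * β := by
  by_cases h1 : a.1 = a'.1 <;> by_cases h2 : a.2 = a'.2 <;>
    simp [h1, h2, Prod.ext_iff] <;> linarith [mul_nonneg hα hβ]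

variable [Fintype X] [Fintype Y]

lemma sum_weighted_collision_le {P : X × Y → ℝ} (hP : ∀ a, 0 ≤ P a) (hPs : ∑ a, P a = 1)
    {α β c : ℝ} (hα : 0 ≤ α) (hβ : 0 ≤ β)
    (hX : ∀ x, ∑ y, P (x, y) ≤ c * α) (hY : ∀ y, ∑ x, P (x, y) ≤ c * β)
    (hXY : ∀ a, P a ≤ c * (α * β)) :
    ∑ a, ∑ a', (if a.1 = a'.1 then 1 else α) * (if a.2 = a'.2 then 1 else β) * (P a * P a')
      ≤ (1 + 3 * c) * (α * β) := by
  have hdiag : collision P id ≤ c * (α * β) :=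
    collision_le_of_fiber_le hP hPs id fun b => by simpa [sum_filter] using hXY b
  have hfst : collision P Prod.fst ≤ c * α :=
    collision_le_of_fiber_le hP hPs Prod.fst fun x => by
      simpa [sum_filter, Fintype.sum_prod_type_right] using hX x
  have hsnd : collision P Prod.snd ≤ c * β :=
    collision_le_of_fiber_le hP hPs Prod.snd fun y => by
      simpa [sum_filter, Fintype.sum_prod_type] using hY y
  have hsplit : ∑ a, ∑ a', ((if a = a' then 1 else 0) + β * (if a.1 = a'.1 then 1 else 0)
        + α * (if a.2 = a'.2 then 1 else 0) + α * β) * (P a * P a')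
      = collision P id + β * collision P Prod.fst + α * collision P Prod.snd
        + α * β * (∑ a, P a) ^ 2 := by
    simp only [collision, add_mul, sum_add_distrib, mul_assoc, ← mul_sum, boole_mul, sq,
      Finset.sum_mul_sum, id]
  calc _ ≤ ∑ a, ∑ a', ((if a = a' then 1 else 0) + β * (if a.1 = a'.1 then 1 else 0)
        + α * (if a.2 = a'.2 then 1 else 0) + α * β) * (P a * P a') := by
        gcongr with a _ a' _
        · exact mul_nonneg (hP a) (hP a')
        · exact collision_weight_le hα hβ a a'
    _ ≤ (1 + 3 * c) * (α * β) := by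
        rw [hsplit, hPs]
        linarith [mul_le_mul_of_nonneg_left hfst hβ, mul_le_mul_of_nonneg_left hsnd hα]

end Product

lemma card_filter_collide_le {S Z U : Type*} [Fintype S] [Nonempty S] [DecidableEq Z]
    [DecidableEq U] {g : S → Z → U} {α : ℝ}
    (hg : ∀ z z', z ≠ z' → (#{s | g s z = g s z'} : ℝ) / Fintype.card S ≤ α) (z z' : Z) :
    (#{s | g s z = g s z'} : ℝ) ≤ Fintype.card S * (if z = z' then 1 else α) := by
  by_cases hz : z = z'
  · simp [hz]
  · rw [if_neg hz, mul_comm, ← div_le_iff₀ (by positivity)]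
    exact hg z z' hz

section Hash

variable {X Y S R U V : Type*} [Fintype X] [Fintype Y] [DecidableEq U] [DecidableEq V]

/-- `|S| |R|` times the probability that `(g(S,X), h(R,Y), S, R) = t`. -/
def hashMass (P : X × Y → ℝ) (g : S → X → U) (h : R → Y → V) (t : (U × V) × S × R) : ℝ :=
  ∑ a with g t.2.1 a.1 = t.1.1 ∧ h t.2.2 a.2 = t.1.2, P a

lemma hashMass_eq_sum_fiber (P : X × Y → ℝ) (g : S → X → U) (h : R → Y → V)
    (uv : U × V) (sr : S × R) :
    hashMass P g h (uv, sr) = ∑ a with (g sr.1 a.1, h sr.2 a.2) = uv, P a := by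
  simp only [hashMass, Prod.ext_iff]

variable [Fintype S] [Fintype R] [Fintype U] [Fintype V]

lemma sum_hashMass (P : X × Y → ℝ) (g : S → X → U) (h : R → Y → V) :
    ∑ t, hashMass P g h t = Fintype.card S * Fintype.card R * ∑ a, P a := by
  calc ∑ t, hashMass P g h t = ∑ sr : S × R, ∑ uv, hashMass P g h (uv, sr) := by
        rw [Fintype.sum_prod_type, Finset.sum_comm]
    _ = ∑ _sr : S × R, ∑ a, P a := by
        simp only [hashMass_eq_sum_fiber, sum_fiberwise]
    _ = _ := by simp [mul_assoc]

lemma sum_hashMass_sq (P : X × Y → ℝ) (g : S → X → U) (h : R → Y → V) :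
    ∑ t, hashMass P g h t ^ 2 = ∑ a, ∑ a',
      (#{s | g s a.1 = g s a'.1} : ℝ) * #{r | h r a.2 = h r a'.2} * (P a * P a') := by
  calc ∑ t, hashMass P g h t ^ 2
      = ∑ sr : S × R, collision P (fun a => (g sr.1 a.1, h sr.2 a.2)) := by
        rw [Fintype.sum_prod_type, Finset.sum_comm]
        simp only [hashMass_eq_sum_fiber, collision_eq_sum_sq]
    _ = ∑ a, ∑ a', ∑ sr : S × R,
          if g sr.1 a.1 = g sr.1 a'.1 ∧ h sr.2 a.2 = h sr.2 a'.2 then P a * P a' else 0 := by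
        simp only [collision, Prod.ext_iff]
        rw [Finset.sum_comm]
        exact sum_congr rfl fun a _ => Finset.sum_comm
    _ = _ := by
        refine sum_congr rfl fun a _ => sum_congr rfl fun a' _ => ?_
        rw [← sum_filter, sum_const, nsmul_eq_mul, ← univ_product_univ,
          filter_product (fun s => g s a.1 = g s a'.1) (fun r => h r a.2 = h r a'.2),
          card_product, Nat.cast_mul]

lemma sum_hashMass_sq_le [Nonempty S] [Nonempty R] [DecidableEq X] [DecidableEq Y]
    {P : X × Y → ℝ} (hP : ∀ a, 0 ≤ P a) (hPs : ∑ a, P a = 1)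
    {g : S → X → U} {h : R → Y → V} {α β c : ℝ} (hα : 0 ≤ α) (hβ : 0 ≤ β)
    (hg : ∀ x x', x ≠ x' → (#{s | g s x = g s x'} : ℝ) / Fintype.card S ≤ α)
    (hh : ∀ y y', y ≠ y' → (#{r | h r y = h r y'} : ℝ) / Fintype.card R ≤ β)
    (hX : ∀ x, ∑ y, P (x, y) ≤ c * α) (hY : ∀ y, ∑ x, P (x, y) ≤ c * β)
    (hXY : ∀ a, P a ≤ c * (α * β)) :
    ∑ t, hashMass P g h t ^ 2
      ≤ Fintype.card S * Fintype.card R * ((1 + 3 * c) * (α * β)) := by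
  rw [sum_hashMass_sq]
  calc _ ≤ ∑ a, ∑ a', Fintype.card S * (if a.1 = a'.1 then 1 else α)
          * (Fintype.card R * (if a.2 = a'.2 then 1 else β)) * (P a * P a') := by
        gcongr with a _ a' _
        · exact mul_nonneg (hP a) (hP a')
        · exact card_filter_collide_le hg a.1 a'.1
        · exact card_filter_collide_le hh a.2 a'.2
    _ = Fintype.card S * Fintype.card R * ∑ a, ∑ a', (if a.1 = a'.1 then 1 else α)
          * (if a.2 = a'.2 then 1 else β) * (P a * P a') := by
        simp only [mul_sum]
        exact sum_congr rfl fun a _ => sum_congr rfl fun a' _ => by ring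
    _ ≤ _ := by
        gcongr
        exact sum_weighted_collision_le hP hPs hα hβ hX hY hXY

end Hash

lemma sum_abs_sub_inv_card_le_sqrt {T : Type*} [Fintype T] {q : T → ℝ} (hq : ∑ t, q t = 1) :
    ∑ t, |q t - (Fintype.card T : ℝ)⁻¹| ≤ √(Fintype.card T * ∑ t, q t ^ 2 - 1) := by
  have : Nonempty T := univ_nonempty_iff.mp (nonempty_of_sum_ne_zero (hq ▸ one_ne_zero))
  have hT : (Fintype.card T : ℝ) ≠ 0 := by positivity
  have hsq : Fintype.card T * ∑ t, (q t - (Fintype.card T : ℝ)⁻¹) ^ 2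
      = Fintype.card T * ∑ t, q t ^ 2 - 1 := by
    simp only [sub_sq, sum_add_distrib, sum_sub_distrib, ← sum_mul, ← mul_sum, hq, sum_const,
      card_univ, nsmul_eq_mul]
    field_simp
    ring
  rw [Real.le_sqrt (sum_nonneg fun t _ => abs_nonneg _) (hsq ▸ by positivity), ← hsq]
  simpa [sq_abs] using sq_sum_le_card_mul_sum_sq (s := univ) (f := fun t => |q t - _|)

/-- Distributed leftover hash lemma: if `m ≤ H_∞(X) − 2 log(1/ε)`,
`n ≤ H_∞(Y) − 2 log(1/ε)` and `m + n ≤ H_∞(X,Y) − 2 log(1/ε)` (expressed via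
bounds on the maximal probabilities), and `g, h` are 2-universal hash families,
then `(g(S,X), h(R,Y), S, R)` is `(√3/2)·ε`-close to uniform on the first two
components, for independent uniform seeds `(S, R)`. -/
theorem stmt_13 {X Y S R : Type*} [Fintype X] [Fintype Y]
    [Fintype S] [Nonempty S] [Fintype R] [Nonempty R]
    {m n : ℕ} (P : X × Y → ℝ)
    (g : S → X → (Fin m → Bool)) (h : R → Y → (Fin n → Bool)) (ε : ℝ)
    (hP : ∀ a, 0 ≤ P a) (hPs : ∑ a, P a = 1) (hε : 0 < ε)
    (hminX : ∀ x, (∑ y, P (x, y)) ≤ ε ^ 2 / 2 ^ m)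
    (hminY : ∀ y, (∑ x, P (x, y)) ≤ ε ^ 2 / 2 ^ n)
    (hminXY : ∀ a, P a ≤ ε ^ 2 / 2 ^ (m + n))
    (hunivg : ∀ x x', x ≠ x' →
      ((Finset.univ.filter (fun s => g s x = g s x')).card : ℝ) / (Fintype.card S)
        ≤ 1 / 2 ^ m)
    (hunivh : ∀ y y', y ≠ y' →
      ((Finset.univ.filter (fun r => h r y = h r y')).card : ℝ) / (Fintype.card R)
        ≤ 1 / 2 ^ n) :
    (1/2) * ∑ t : ((Fin m → Bool) × (Fin n → Bool)) × S × R,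
        |(1 / ((Fintype.card S : ℝ) * (Fintype.card R : ℝ)))
            * ∑ a ∈ Finset.univ.filter
                (fun a : X × Y => g t.2.1 a.1 = t.1.1 ∧ h t.2.2 a.2 = t.1.2), P a
          - 1 / ((2 ^ m : ℝ) * (2 ^ n : ℝ)
                  * (Fintype.card S : ℝ) * (Fintype.card R : ℝ))|
      ≤ (Real.sqrt 3 / 2) * ε := by
  classical
  set K : ℝ := (Fintype.card S : ℝ)
  set L : ℝ := (Fintype.card R : ℝ)
  have hK : 0 < K := by positivity
  have hL : 0 < L := by positivity
  set q := fun t => 1 / (K * L) * hashMass P g h t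
  have hcard : (Fintype.card (((Fin m → Bool) × (Fin n → Bool)) × S × R) : ℝ)
      = 2 ^ m * 2 ^ n * K * L := by
    simp only [Fintype.card_prod, Fintype.card_fun, Fintype.card_bool, Fintype.card_fin,
      Nat.cast_mul, Nat.cast_pow, Nat.cast_ofNat, K, L]
    ring
  have hq_sum : ∑ t, q t = 1 := by
    simp only [q, ← mul_sum, sum_hashMass, hPs, mul_one]
    exact one_div_mul_cancel (by positivity)
  have hq_sq : Fintype.card (((Fin m → Bool) × (Fin n → Bool)) × S × R) * ∑ t, q t ^ 2
      ≤ 1 + 3 * ε ^ 2 := by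
    have hcoll := sum_hashMass_sq_le hP hPs (by positivity) (by positivity) hunivg hunivh
      (c := ε ^ 2) (by simpa only [mul_one_div] using hminX)
      (by simpa only [mul_one_div] using hminY)
      (fun a => (hminXY a).trans_eq (by rw [pow_add]; ring))
    simp only [q, mul_pow, ← mul_sum, hcard]
    calc _ ≤ 2 ^ m * 2 ^ n * K * L * ((1 / (K * L)) ^ 2
          * (K * L * ((1 + 3 * ε ^ 2) * (1 / 2 ^ m * (1 / 2 ^ n))))) := by gcongr
      _ = 1 + 3 * ε ^ 2 := by field_simp
  calc (1 / 2) * ∑ t, |q t - 1 / (2 ^ m * 2 ^ n * K * L)|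
      = 1 / 2 * ∑ t,
          |q t - (Fintype.card (((Fin m → Bool) × (Fin n → Bool)) × S × R) : ℝ)⁻¹| := by
        rw [hcard, inv_eq_one_div]
    _ ≤ 1 / 2 * √(3 * ε ^ 2) := by
        gcongr
        exact (sum_abs_sub_inv_card_le_sqrt hq_sum).trans (Real.sqrt_le_sqrt (by linarith))
    _ = √3 / 2 * ε := by
        rw [Real.sqrt_mul (by norm_num), Real.sqrt_sq hε.le]
        ring
end

section
/- Define f(p,q) := 1 − (1 − p − q)^2. For p, q ≥ 0 with p + q < 1, set (p', q') := (p^4, 1 − (1−q)^4) if p^2 ≥ 2q − q^2, and (p', q') := (1 − (1−p^2)^2, (1 − (1−q)^2)^2) otherwise (assuming p ≥ q; symmetric otherwise). Then 1 − p' − q' ≥ √(2 − (1−p−q)^2) · (1 − p − q), and consequently f(p', q') ≤ f(p,q)^2. -/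
/-- Key inequality for WOT amplification: with `f(p,q) := 1 − (1−p−q)²` and
`(p', q')` obtained by applying `S-Reduce` twice (if `p² ≥ 2q − q²`) or
`S-Reduce` then `R-Reduce` (otherwise), one has
`1 − p' − q' ≥ √(2 − (1−p−q)²)·(1−p−q)` and hence `f(p',q') ≤ f(p,q)²`. -/
theorem stmt_19 (p q p' q' : ℝ)
    (hq : 0 ≤ q) (hqp : q ≤ p) (hpq : p + q < 1)
    (hdef : (2 * q - q ^ 2 ≤ p ^ 2 ∧ p' = p ^ 4 ∧ q' = 1 - (1 - q) ^ 4) ∨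
            (p ^ 2 < 2 * q - q ^ 2 ∧ p' = 1 - (1 - p ^ 2) ^ 2 ∧
              q' = (1 - (1 - q) ^ 2) ^ 2)) :
    1 - p' - q' ≥ Real.sqrt (2 - (1 - p - q) ^ 2) * (1 - p - q) ∧
    1 - (1 - p' - q') ^ 2 ≤ (1 - (1 - p - q) ^ 2) ^ 2 := by
  have hs : (0:ℝ) < 1 - p - q := by linarith
  have hp : 0 ≤ p := le_trans hq hqp
  have htsq : (2 - (1 - p - q) ^ 2) * (1 - p - q) ^ 2 ≤ (1 - p' - q') ^ 2 ∧
      0 ≤ 1 - p' - q' := by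
    rcases hdef with ⟨h, hp', hq'⟩ | ⟨h, hp', hq'⟩ <;> subst hp' <;> subst hq'
    · have hfac : 1 - p ^ 4 - (1 - (1 - q) ^ 4)
          = (1 - p - q) * ((1 + p - q) * ((1 - q) ^ 2 + p ^ 2)) := by ring
      have hB : (1:ℝ) ≤ (1 - q) ^ 2 + p ^ 2 := by nlinarith
      have hu : 2 - (1 - p - q) ^ 2 ≤ (1 + p - q) ^ 2 := by nlinarith
      have hkey : 2 - (1 - p - q) ^ 2 ≤ ((1 + p - q) * ((1 - q) ^ 2 + p ^ 2)) ^ 2 := by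
        nlinarith [mul_nonneg (sq_nonneg (1 + p - q))
          (show (0:ℝ) ≤ ((1 - q) ^ 2 + p ^ 2) ^ 2 - 1 by nlinarith)]
      constructor
      · rw [hfac, mul_pow]
        exact mul_le_mul_of_nonneg_right hkey (sq_nonneg _) |>.trans_eq (mul_comm _ _)
      · rw [hfac]
        have : (0:ℝ) ≤ (1 + p - q) * ((1 - q) ^ 2 + p ^ 2) := by nlinarith
        positivity
    · have hfac : 1 - (1 - (1 - p ^ 2) ^ 2) - (1 - (1 - q) ^ 2) ^ 2
          = (1 - p - q) * ((1 + p - q) * (1 - p ^ 2 + 2 * q - q ^ 2)) := by ring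
      have hkey : 2 - (1 - p - q) ^ 2
          ≤ ((1 + p - q) * (1 - p ^ 2 + 2 * q - q ^ 2)) ^ 2 := by
        nlinarith [sq_nonneg (p - q), sq_nonneg (2 * q - q ^ 2 - p ^ 2),
          mul_nonneg (sub_nonneg.2 hqp) (show (0:ℝ) ≤ 2 * q - q ^ 2 - p ^ 2 by linarith),
          sq_nonneg (p + q), mul_nonneg hq hq,
          sq_nonneg ((p - q) * (2 * q - q ^ 2 - p ^ 2)), mul_nonneg hq hp]
      constructor
      · rw [hfac, mul_pow]
        exact mul_le_mul_of_nonneg_right hkey (sq_nonneg _) |>.trans_eq (mul_comm _ _)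
      · rw [hfac]
        have : (0:ℝ) ≤ (1 + p - q) * (1 - p ^ 2 + 2 * q - q ^ 2) := by nlinarith
        positivity
  obtain ⟨htsq, ht0⟩ := htsq
  have hmain : Real.sqrt (2 - (1 - p - q) ^ 2) * (1 - p - q) ≤ 1 - p' - q' := by
    have h1 : Real.sqrt (2 - (1 - p - q) ^ 2) * (1 - p - q)
        = Real.sqrt ((2 - (1 - p - q) ^ 2) * (1 - p - q) ^ 2) := by
      rw [Real.sqrt_mul (by nlinarith), Real.sqrt_sq hs.le]
    rw [h1]
    calc Real.sqrt ((2 - (1 - p - q) ^ 2) * (1 - p - q) ^ 2)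
        ≤ Real.sqrt ((1 - p' - q') ^ 2) := Real.sqrt_le_sqrt htsq
      _ = 1 - p' - q' := Real.sqrt_sq ht0
  exact ⟨hmain, by nlinarith [htsq]⟩
end
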